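/- arXiv:1910.10617 — 4 statements merged into one kernel-verified Lean document; each statement's English description precedes it below -/
import Mathlib

section
/- Suppose there exist relatively prime positive integers Ñ and M̃ such that Ñλ^i ∈ ℕ for all i and M̃χ^j ∈ ℕ for all j, where λ ∈ ℝ^N has positive entries summing to 1 (N ≥ 2) and χ ∈ ℝ^M has nonnegative entries. Then d_λ = dist(S'_λ, S_χ) ≥ 1/(M̃Ñ). -/
/-!
Clearing denominators, a proper subset sum `x` of `λ` is `a / Ñ` with `0 < a < Ñ`, and a subset
sum `y` of `χ` is `b / M̃` with `b ∈ ℕ`. Hence `M̃ Ñ (x - y) = a M̃ - b Ñ` is an integer, and it is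
nonzero because `Ñ ∣ b Ñ` while coprimality and `0 < a < Ñ` give `Ñ ∤ a M̃`.
-/

/-- The set of all subset sums of a vector `V ∈ ℝ^k`. -/
def subsetSums {k : ℕ} (V : Fin k → ℝ) : Set ℝ :=
  {s | ∃ A : Finset (Fin k), s = ∑ i ∈ A, V i}

/-- The set of proper nonempty subset sums of a vector `V ∈ ℝ^k`. -/
def properSubsetSums {k : ℕ} (V : Fin k → ℝ) : Set ℝ :=
  {s | ∃ A : Finset (Fin k), A.Nonempty ∧ A ≠ Finset.univ ∧ s = ∑ i ∈ A, V i}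

/-- `d_λ = dist(S'_λ, S_χ)`. -/
noncomputable def dWeight {N M : ℕ} (lam : Fin N → ℝ) (chi : Fin M → ℝ) : ℝ :=
  sInf {d | ∃ x ∈ properSubsetSums lam, ∃ y ∈ subsetSums chi, d = |x - y|}

open Finset

lemma exists_nat_mul_sum_eq {ι : Type*} {v : ι → ℝ} {c : ℝ} (hv : ∀ i, ∃ n : ℕ, c * v i = n)
    (A : Finset ι) : ∃ n : ℕ, c * ∑ i ∈ A, v i = n := by
  choose f hf using hv
  exact ⟨∑ i ∈ A, f i, by rw [Finset.mul_sum]; push_cast; exact sum_congr rfl fun i _ => hf i⟩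

lemma properSubsetSums_nonempty {k : ℕ} (hk : 2 ≤ k) (V : Fin k → ℝ) :
    (properSubsetSums V).Nonempty := by
  refine ⟨_, {⟨0, by omega⟩}, singleton_nonempty _, fun h => ?_, rfl⟩
  have := congrArg Finset.card h
  rw [card_singleton, card_univ, Fintype.card_fin] at this
  omega

lemma properSubsetSums_subset_Ioo {k : ℕ} {lam : Fin k → ℝ} (hpos : ∀ i, 0 < lam i)
    (hsum : ∑ i, lam i = 1) : properSubsetSums lam ⊆ Set.Ioo 0 1 := by
  rintro _ ⟨A, hA, hAne, rfl⟩
  obtain ⟨i, hi⟩ : ∃ i, i ∉ A := by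
    by_contra! h
    exact hAne (eq_univ_of_forall h)
  refine ⟨sum_pos (fun i _ => hpos i) hA, hsum ▸ ?_⟩
  exact sum_lt_sum_of_subset (subset_univ A) (mem_univ i) hi (hpos i) fun j _ _ => (hpos j).le

lemma not_dvd_of_mul_eq_of_mem_Ioo {n a : ℕ} {x : ℝ} (hn : 0 < n) (ha : n * x = a)
    (hx : x ∈ Set.Ioo 0 1) : ¬ n ∣ a := by
  rintro ⟨k, rfl⟩
  have hxk : x = k := by
    push_cast at ha
    exact mul_left_cancel₀ (by positivity) ha
  have h0 : (0 : ℝ) < k := hxk ▸ hx.1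
  have h1 : (k : ℝ) < 1 := hxk ▸ hx.2
  norm_cast at h0 h1
  omega

lemma one_div_mul_le_abs_sub {Nt Mt a b : ℕ} {x y : ℝ} (hcop : Nat.Coprime Nt Mt)
    (ha : Nt * x = a) (hb : Mt * y = b) (hndvd : ¬ Nt ∣ a) :
    1 / ((Mt : ℝ) * Nt) ≤ |x - y| := by
  have hne : (a : ℤ) * Mt - b * Nt ≠ 0 := by
    intro h
    have hab : a * Mt = b * Nt := by exact_mod_cast sub_eq_zero.mp h
    exact hndvd (hcop.dvd_of_dvd_mul_right ⟨b, by rw [hab, mul_comm]⟩)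
  have hint : (Mt : ℝ) * Nt * (x - y) = ((a * Mt - b * Nt : ℤ) : ℝ) := by
    push_cast
    linear_combination (Mt : ℝ) * ha - (Nt : ℝ) * hb
  refine div_le_of_le_mul₀ (by positivity) (abs_nonneg _) ?_
  calc (1 : ℝ) ≤ |((a * Mt - b * Nt : ℤ) : ℝ)| := by exact_mod_cast Int.one_le_abs hne
    _ = |x - y| * (Mt * Nt) := by
      rw [← hint, abs_mul, abs_of_nonneg (by positivity : (0 : ℝ) ≤ Mt * Nt), mul_comm]

lemma le_dWeight {N M : ℕ} {lam : Fin N → ℝ} {chi : Fin M → ℝ} {c : ℝ}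
    (hne : (properSubsetSums lam).Nonempty)
    (h : ∀ x ∈ properSubsetSums lam, ∀ y ∈ subsetSums chi, c ≤ |x - y|) :
    c ≤ dWeight lam chi := by
  obtain ⟨x, hx⟩ := hne
  refine le_csInf ⟨_, x, hx, 0, ⟨∅, by simp⟩, rfl⟩ ?_
  rintro d ⟨x, hx, y, hy, rfl⟩
  exact h x hx y hy

theorem stmt3_general {N M : ℕ} (hN : 2 ≤ N) (lam : Fin N → ℝ) (chi : Fin M → ℝ)
    (hlampos : ∀ i, 0 < lam i) (hlamsum : ∑ i, lam i = 1)
    (Nt Mt : ℕ) (hNt : 0 < Nt) (hcop : Nat.Coprime Nt Mt)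
    (hlamint : ∀ i, ∃ n : ℕ, (Nt : ℝ) * lam i = n)
    (hchiint : ∀ j, ∃ n : ℕ, (Mt : ℝ) * chi j = n) :
    1 / ((Mt : ℝ) * Nt) ≤ dWeight lam chi := by
  refine le_dWeight (properSubsetSums_nonempty hN lam) ?_
  rintro x hx _ ⟨J, rfl⟩
  obtain ⟨A, -, -, rfl⟩ := id hx
  obtain ⟨a, ha⟩ := exists_nat_mul_sum_eq hlamint A
  obtain ⟨b, hb⟩ := exists_nat_mul_sum_eq hchiint J
  exact one_div_mul_le_abs_sub hcop ha hb
    (not_dvd_of_mul_eq_of_mem_Ioo hNt ha (properSubsetSums_subset_Ioo hlampos hlamsum hx))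

/-- if `Ñλ^i ∈ ℕ` and `M̃χ^j ∈ ℕ` with `gcd(Ñ, M̃) = 1`, then
`d_λ ≥ 1/(M̃Ñ)`. -/
theorem stmt3 {N M : ℕ} (hN : 2 ≤ N) (lam : Fin N → ℝ) (chi : Fin M → ℝ)
    (hlampos : ∀ i, 0 < lam i) (hlamsum : ∑ i, lam i = 1)
    (hchinn : ∀ j, 0 ≤ chi j)
    (Nt Mt : ℕ) (hNt : 0 < Nt) (hMt : 0 < Mt) (hcop : Nat.Coprime Nt Mt)
    (hlamint : ∀ i, ∃ n : ℕ, (Nt : ℝ) * lam i = n)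
    (hchiint : ∀ j, ∃ n : ℕ, (Mt : ℝ) * chi j = n) :
    1 / ((Mt : ℝ) * Nt) ≤ dWeight lam chi :=
  stmt3_general hN lam chi hlampos hlamsum Nt Mt hNt hcop hlamint hchiint
end

section
/- Let λ ∈ ℝ^N with Σᵢλ^i = 1 and χ ∈ ℝ^M with Σⱼχ^j = 1, all entries nonnegative, N ≥ 2. Let S = {λ^2, …, λ^N, −χ^1, …, −χ^M} (note λ^1 is excluded). Then d_λ = dist(S'_λ, S_χ) equals the minimum of |Σ_{a∈A} a| over all subsets A of S that contain at least one element λ^i with i ≥ 2. -/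
/-- `d_λ` equals the minimum of `|Σ_{a∈A} a|` over all subsets `A` of
`S = {λ^2, …, λ^N, −χ^1, …, −χ^M}` containing at least one `λ^i` (with `i ≥ 2`).
A subset `A` is encoded as a pair `(I, J)` of index sets, where `I ⊆ {2,…,N}`
(i.e. `0 ∉ I`) is nonempty and `J ⊆ {1,…,M}`, with
`Σ_{a∈A} a = Σ_{i∈I} λ^i − Σ_{j∈J} χ^j`. -/
theorem stmt5 {N M : ℕ} (hN : 2 ≤ N) (lam : Fin N → ℝ) (chi : Fin M → ℝ)
    (hlamnn : ∀ i, 0 ≤ lam i) (hlamsum : ∑ i, lam i = 1)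
    (hchinn : ∀ j, 0 ≤ chi j) (hchisum : ∑ j, chi j = 1) :
    dWeight lam chi =
      sInf {v | ∃ I : Finset (Fin N), ∃ J : Finset (Fin M),
        I.Nonempty ∧ (⟨0, by omega⟩ : Fin N) ∉ I ∧
        v = |∑ i ∈ I, lam i - ∑ j ∈ J, chi j|} := by
  unfold dWeight
  congr 1
  ext v
  simp only [Set.mem_setOf_eq, properSubsetSums, subsetSums]
  constructor
  · rintro ⟨x, ⟨I, hIne, hIuniv, rfl⟩, y, ⟨J, rfl⟩, rfl⟩
    by_cases h0 : (⟨0, by omega⟩ : Fin N) ∈ I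
    · refine ⟨Iᶜ, Jᶜ, Finset.nonempty_iff_ne_empty.mpr (by simpa using hIuniv), by simp [h0], ?_⟩
      have h1 : ∑ i ∈ Iᶜ, lam i = 1 - ∑ i ∈ I, lam i := by
        have := Finset.sum_compl_add_sum I lam
        linarith [hlamsum ▸ this]
      have h2 : ∑ j ∈ Jᶜ, chi j = 1 - ∑ j ∈ J, chi j := by
        have := Finset.sum_compl_add_sum J chi
        linarith [hchisum ▸ this]
      rw [h1, h2, show (1 - ∑ i ∈ I, lam i) - (1 - ∑ j ∈ J, chi j)
        = -((∑ i ∈ I, lam i) - ∑ j ∈ J, chi j) by ring, abs_neg]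
    · exact ⟨I, J, hIne, h0, rfl⟩
  · rintro ⟨I, J, hIne, h0, rfl⟩
    exact ⟨_, ⟨I, hIne, fun h => h0 (h ▸ Finset.mem_univ _), rfl⟩, _, ⟨J, rfl⟩, rfl⟩
end

section
/- Let B = {λ ∈ Λ : S'_λ ∩ S_χ ≠ ∅} be the set of weight vectors whose proper subset sums intersect the subset sums of a fixed vector χ ∈ ℝ^M. Then B is contained in a finite union of sets, each of which is the intersection of Λ with an affine hyperplane {λ : ⟨v, λ⟩ = s} for some v ∈ {0,1}^N with v ∉ {(0,…,0), (1,…,1)} and some s ∈ S_χ; consequently B has Hausdorff dimension at most N − 2. -/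
/-! A proper nonempty subset sum `∑_{i ∈ A} λᵢ` lying in `S_χ` puts `λ` on one of the finitely
many hyperplanes `⟨1_A, λ⟩ = s`, `s ∈ S_χ`. Together with `∑ λᵢ = 1` such a hyperplane cuts out
an affine subspace of codimension two, since `1_A` and `1` are independent for `∅ ≠ A ≠ univ`,
and a fibre of a linear map has Hausdorff dimension at most that of its kernel. -/

open MeasureTheory

/-- The probability simplex `Λ ⊂ ℝ^N`. -/
def simplexSet (N : ℕ) : Set (Fin N → ℝ) :=
  {lam | (∀ i, lam i ∈ Set.Icc (0:ℝ) 1) ∧ ∑ i, lam i = 1}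

open Module

theorem subsetSums_finite {k : ℕ} (V : Fin k → ℝ) : (subsetSums V).Finite := by
  convert Set.finite_range fun A : Finset (Fin k) => ∑ i ∈ A, V i using 1
  ext s
  exact exists_congr fun A => eq_comm

section Fibre

variable {E F : Type*} [NormedAddCommGroup E] [NormedSpace ℝ E] [FiniteDimensional ℝ E]
  [AddCommGroup F] [Module ℝ F]

theorem LinearMap.dimH_preimage_singleton_le (L : E →ₗ[ℝ] F) (y : F) :
    dimH (L ⁻¹' {y}) ≤ finrank ℝ (LinearMap.ker L) := by
  rcases (L ⁻¹' {y}).eq_empty_or_nonempty with h | ⟨x, hx⟩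
  · simp [h]
  have hsub : L ⁻¹' {y} ⊆ Set.range fun w : LinearMap.ker L => x + (w : E) := fun z hz =>
    ⟨⟨z - x, by simp_all [LinearMap.mem_ker]⟩, add_sub_cancel x z⟩
  exact (dimH_mono hsub).trans
    (contDiff_const.add (LinearMap.ker L).subtypeL.contDiff).dimH_range_le

theorem LinearMap.dimH_preimage_singleton_le_of_surjective [FiniteDimensional ℝ F]
    {L : E →ₗ[ℝ] F} (hL : Function.Surjective L) (y : F) :
    dimH (L ⁻¹' {y}) ≤ finrank ℝ E - finrank ℝ F := by
  have hrank := L.finrank_range_add_finrank_ker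
  rw [LinearMap.range_eq_top.2 hL, finrank_top] at hrank
  calc dimH (L ⁻¹' {y}) ≤ finrank ℝ (LinearMap.ker L) := L.dimH_preimage_singleton_le y
    _ = ((finrank ℝ E - finrank ℝ F : ℕ) : ENNReal) := by congr 1; omega
    _ = finrank ℝ E - finrank ℝ F := ENNReal.natCast_sub _ _

end Fibre

theorem dimH_setOf_sum_eq_and_sum_eq_le {ι : Type*} [Fintype ι] {A : Finset ι}
    (hA : A.Nonempty) (hAu : A ≠ Finset.univ) (a b : ℝ) :
    dimH {x : ι → ℝ | ∑ i, x i = a ∧ ∑ i ∈ A, x i = b} ≤ Fintype.card ι - 2 := by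
  let L : (ι → ℝ) →ₗ[ℝ] ℝ × ℝ :=
    (∑ i, LinearMap.proj i).prod (∑ i ∈ A, LinearMap.proj i)
  have hL : ∀ x, L x = (∑ i, x i, ∑ i ∈ A, x i) := fun x => by simp [L]
  have hfibre : {x : ι → ℝ | ∑ i, x i = a ∧ ∑ i ∈ A, x i = b} = L ⁻¹' {(a, b)} := by
    ext x
    simp [hL]
  obtain ⟨i, hi⟩ := hA
  obtain ⟨j, hj⟩ := show ∃ j, j ∉ A by simpa [Finset.eq_univ_iff_forall] using hAu
  have hsurj : Function.Surjective L := by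
    classical
    rintro ⟨a, b⟩
    refine ⟨Pi.single i b + Pi.single j (a - b), ?_⟩
    simp [hL, Finset.sum_add_distrib, Finset.sum_pi_single', hi, hj]
  rw [hfibre]
  simpa using LinearMap.dimH_preimage_singleton_le_of_surjective hsurj (a, b)

def simplexSlice (N : ℕ) (v : Fin N → Bool) (s : ℝ) : Set (Fin N → ℝ) :=
  simplexSet N ∩ {lam | ∑ i, (if v i then lam i else 0) = s}

theorem dimH_simplexSlice_le {N : ℕ} {v : Fin N → Bool} (hv0 : v ≠ fun _ => false)
    (hv1 : v ≠ fun _ => true) (s : ℝ) : dimH (simplexSlice N v s) ≤ N - 2 := by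
  let A := Finset.univ.filter fun i => v i
  have hA : A.Nonempty := by simpa [A, Finset.Nonempty, funext_iff] using hv0
  have hAu : A ≠ Finset.univ := by simpa [A, Finset.eq_univ_iff_forall, funext_iff] using hv1
  have hsub : simplexSlice N v s ⊆ {x | ∑ i, x i = 1 ∧ ∑ i ∈ A, x i = s} :=
    fun lam ⟨hlam, hs⟩ => ⟨hlam.2, by rwa [Finset.sum_filter]⟩
  simpa using (dimH_mono hsub).trans (dimH_setOf_sum_eq_and_sum_eq_le hA hAu 1 s)

theorem setOf_properSubsetSums_inter_nonempty_subset {N : ℕ} (S : Set ℝ) :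
    {lam ∈ simplexSet N | (properSubsetSums lam ∩ S).Nonempty} ⊆
      ⋃ (v : Fin N → Bool) (_ : v ≠ fun _ => false) (_ : v ≠ fun _ => true) (s ∈ S),
        simplexSlice N v s := by
  rintro lam ⟨hlam, s, ⟨A, ⟨a, ha⟩, hAu, rfl⟩, hs⟩
  simp only [Set.mem_iUnion]
  refine ⟨fun i => decide (i ∈ A), ?_, ?_, _, hs, hlam, ?_⟩
  · simpa [funext_iff] using ⟨a, ha⟩
  · simpa [funext_iff, Finset.eq_univ_iff_forall] using hAu
  · simp [Finset.sum_ite_mem]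

theorem dimH_iUnion_simplexSlice_le {N : ℕ} {S : Set ℝ} (hS : S.Countable) :
    dimH (⋃ (v : Fin N → Bool) (_ : v ≠ fun _ => false) (_ : v ≠ fun _ => true) (s ∈ S),
      simplexSlice N v s) ≤ N - 2 := by
  simp only [dimH_iUnion, dimH_bUnion hS, iSup_le_iff]
  exact fun v hv0 hv1 s _ => dimH_simplexSlice_le hv0 hv1 s

theorem stmt6_general {N M : ℕ} (chi : Fin M → ℝ) :
    ({lam ∈ simplexSet N | (properSubsetSums lam ∩ subsetSums chi).Nonempty} ⊆
      ⋃ (v : Fin N → Bool) (_ : v ≠ fun _ => false) (_ : v ≠ fun _ => true)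
        (s ∈ subsetSums chi),
        simplexSet N ∩ {lam | ∑ i, (if v i then lam i else 0) = s}) ∧
    dimH {lam ∈ simplexSet N | (properSubsetSums lam ∩ subsetSums chi).Nonempty} ≤
      (N : ENNReal) - 2 := by
  have hcover := setOf_properSubsetSums_inter_nonempty_subset (N := N) (subsetSums chi)
  exact ⟨hcover, (dimH_mono hcover).trans
    (dimH_iUnion_simplexSlice_le (subsetSums_finite chi).countable)⟩

/-- the bad set `B = {λ ∈ Λ : S'_λ ∩ S_χ ≠ ∅}` is contained in the (finite)
union, over `0-1` vectors `v ∉ {0, 1}` and `s ∈ S_χ`, of `Λ ∩ {λ : ⟨v, λ⟩ = s}`;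
consequently `B` has Hausdorff dimension at most `N − 2`. -/
theorem stmt6 {N M : ℕ} (hN : 2 ≤ N) (chi : Fin M → ℝ) :
    ({lam ∈ simplexSet N | (properSubsetSums lam ∩ subsetSums chi).Nonempty} ⊆
      ⋃ (v : Fin N → Bool) (_ : v ≠ fun _ => false) (_ : v ≠ fun _ => true)
        (s ∈ subsetSums chi),
        simplexSet N ∩ {lam | ∑ i, (if v i then lam i else 0) = s}) ∧
    dimH {lam ∈ simplexSet N | (properSubsetSums lam ∩ subsetSums chi).Nonempty} ≤
      (N : ENNReal) - 2 :=
  stmt6_general chi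
end

section
/- Let X be a compact metric space, Y = {y₁,…,y_N} a finite set, and c : X × Y → ℝ continuous. For ψ ∈ ℝ^N define the Laguerre cell Lag_i(ψ) = {x ∈ X : c(x,y_i) + ψ^i = min_k (c(x,y_k) + ψ^k)}. Set M₀ = √N · max_{x∈X}(max_{y∈Y} c(x,y) − min_{y∈Y} c(x,y)). If ψ ∈ ℝ^N satisfies Σᵢψ^i = 0 and every Laguerre cell Lag_i(ψ) has positive μ-measure for a probability measure μ on X, then ‖ψ‖₂ ≤ M₀. -/
open MeasureTheory

/-- if `Σᵢψ^i = 0` and every Laguerre cell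
`Lag_i(ψ) = {x : c(x,yᵢ) + ψ^i = min_k (c(x,y_k) + ψ^k)}` has positive `μ`-measure,
then `‖ψ‖₂ ≤ M₀ = √N · max_x (max_y c(x,y) − min_y c(x,y))`. -/
theorem stmt10 {X : Type*} [MetricSpace X] [CompactSpace X]
    [MeasurableSpace X] [BorelSpace X]
    {N : ℕ} (hN : 2 ≤ N) (c : X → Fin N → ℝ)
    (hc : Continuous fun p : X × Fin N => c p.1 p.2)
    (μ : Measure X) [IsProbabilityMeasure μ]
    (ψ : Fin N → ℝ) (M₀ : ℝ)
    (hM₀ : M₀ = Real.sqrt N * ⨆ x : X, ((⨆ i, c x i) - ⨅ i, c x i))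
    (hsum : ∑ i, ψ i = 0)
    (hcells : ∀ i, 0 < μ {x : X | ∀ k, c x i + ψ i ≤ c x k + ψ k}) :
    Real.sqrt (∑ i, ψ i ^ 2) ≤ M₀ := by
  have hNpos : 0 < N := by omega
  haveI : NeZero N := ⟨by omega⟩
  -- each cell is nonempty
  have hne : ∀ i : Fin N, ∃ x : X, ∀ k, c x i + ψ i ≤ c x k + ψ k := by
    intro i
    obtain ⟨x, hx⟩ := nonempty_of_measure_ne_zero (hcells i).ne'
    exact ⟨x, hx⟩
  -- define g x = sup_i c x i - inf_i c x i
  set g : X → ℝ := fun x => (⨆ i, c x i) - ⨅ i, c x i with hg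
  have hci : ∀ i : Fin N, Continuous fun x => c x i := fun i =>
    hc.comp (continuous_id.prodMk continuous_const)
  have hgc : Continuous g := by
    have h1 : Continuous fun x => ⨆ i, c x i := by
      have := Continuous.finset_sup'_apply (f := fun i (x : X) => c x i)
        (s := (Finset.univ : Finset (Fin N))) Finset.univ_nonempty (fun i _ => hci i)
      convert this using 2 with x
      rw [← Finset.sup'_univ_eq_ciSup]
    have h2 : Continuous fun x => ⨅ i, c x i := by
      have := Continuous.finset_inf'_apply (f := fun i (x : X) => c x i)
        (s := (Finset.univ : Finset (Fin N))) Finset.univ_nonempty (fun i _ => hci i)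
      convert this using 2 with x
      rw [← Finset.inf'_univ_eq_ciInf]
    exact h1.sub h2
  obtain ⟨x₀, _⟩ := hne ⟨0, hNpos⟩
  haveI : Nonempty X := ⟨x₀⟩
  have hbdd : BddAbove (Set.range g) :=
    (isCompact_range hgc).bddAbove
  set D : ℝ := ⨆ x : X, g x with hD
  have hgD : ∀ x, g x ≤ D := fun x => le_ciSup hbdd x
  have hbA : ∀ x : X, BddAbove (Set.range (c x)) := fun x =>
    (Set.finite_range (c x)).bddAbove
  have hbB : ∀ x : X, BddBelow (Set.range (c x)) := fun x =>
    (Set.finite_range (c x)).bddBelow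
  have hgx : ∀ (x : X) (j k : Fin N), c x j - c x k ≤ g x := by
    intro x j k
    have h1 : c x j ≤ ⨆ i, c x i := le_ciSup (hbA x) j
    have h2 : (⨅ i, c x i) ≤ c x k := ciInf_le (hbB x) k
    simp only [hg]; linarith
  have hD0 : 0 ≤ D := le_trans (by have := hgx x₀ ⟨0, hNpos⟩ ⟨0, hNpos⟩; linarith) (hgD x₀)
  -- exists j with ψ j ≤ 0 and j' with ψ j' ≥ 0
  obtain ⟨j, -, hj⟩ : ∃ j ∈ Finset.univ, ψ j ≤ 0 := by
    by_contra h
    push_neg at h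
    have : (0:ℝ) < ∑ i, ψ i :=
      Finset.sum_pos (fun i hi => h i hi) Finset.univ_nonempty
    linarith
  obtain ⟨j', -, hj'⟩ : ∃ j' ∈ Finset.univ, 0 ≤ ψ j' := by
    by_contra h
    push_neg at h
    have : ∑ i, ψ i < 0 :=
      Finset.sum_neg (fun i hi => h i hi) Finset.univ_nonempty
    linarith
  -- |ψ i| ≤ D for all i
  have habs : ∀ i, |ψ i| ≤ D := by
    intro i
    rw [abs_le]
    constructor
    · obtain ⟨x, hx⟩ := hne j'
      have h1 := hx i
      have h2 := hgx x i j'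
      have h3 := hgD x
      linarith
    · obtain ⟨x, hx⟩ := hne i
      have h1 := hx j
      have h2 := hgx x j i
      have h3 := hgD x
      linarith
  have hsq : ∑ i, ψ i ^ 2 ≤ N * D ^ 2 := by
    calc ∑ i, ψ i ^ 2 ≤ ∑ _i : Fin N, D ^ 2 := by
          apply Finset.sum_le_sum
          intro i _
          rw [← sq_abs]
          exact pow_le_pow_left₀ (abs_nonneg _) (habs i) 2
      _ = N * D ^ 2 := by simp [Finset.sum_const, Finset.card_univ]
  calc Real.sqrt (∑ i, ψ i ^ 2) ≤ Real.sqrt (N * D ^ 2) := Real.sqrt_le_sqrt hsq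
    _ = Real.sqrt N * D := by
        rw [Real.sqrt_mul (Nat.cast_nonneg N), Real.sqrt_sq hD0]
    _ = M₀ := by rw [hM₀]
end
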